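/- There exists a positive integer A depending only on d and c such that for every unimodular lattice Λ ∈ ℒ_{d+c} and every real number t₀, the set {t ∈ [t₀, t₀+1] : g_tΛ ∈ S} has at most A elements, and likewise the set {t ∈ [t₀, t₀+1] : g_tΛ ∈ S'} has at most A elements. -/

import Mathlib

open MeasureTheory Filter Topology

noncomputable section

/-- Horizontal component (first `d` coordinates) of `x ∈ ℝ^{d+c}`, in Euclidean `ℝ^d`;
`|x|_+ = ‖hp d c x‖`. -/
def hp (d c : ℕ) (x : Fin (d + c) → ℝ) : EuclideanSpace ℝ (Fin d) :=
  WithLp.toLp 2 fun i => x (Fin.castAdd c i)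

/-- Vertical component (last `c` coordinates) of `x ∈ ℝ^{d+c}`, in Euclidean `ℝ^c`;
the height is `|x|_- = ‖vp d c x‖`. -/
def vp (d c : ℕ) (x : Fin (d + c) → ℝ) : EuclideanSpace ℝ (Fin c) :=
  WithLp.toLp 2 fun j => x (Fin.natAdd d j)

/-- The lattice `M·ℤ^n ⊆ ℝ^n` spanned by the columns of `M`. -/
def latSet {n : ℕ} (M : Matrix (Fin n) (Fin n) ℝ) : Set (Fin n → ℝ) :=
  Set.range fun v : Fin n → ℤ => M.mulVec fun i => (v i : ℝ)

/-- `X` is a minimal vector of `Λ ⊆ ℝ^{d+c}`: any nonzero `Y ∈ Λ` with `|Y|_+ ≤ |X|_+` and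
`|Y|_- ≤ |X|_-` satisfies `|Y|_+ = |X|_+` and `|Y|_- = |X|_-`. -/
def IsMinVec (d c : ℕ) (Λ : Set (Fin (d + c) → ℝ)) (X : Fin (d + c) → ℝ) : Prop :=
  X ∈ Λ ∧ X ≠ 0 ∧ ∀ Y ∈ Λ, Y ≠ 0 → ‖hp d c Y‖ ≤ ‖hp d c X‖ → ‖vp d c Y‖ ≤ ‖vp d c X‖ →
    ‖hp d c Y‖ = ‖hp d c X‖ ∧ ‖vp d c Y‖ = ‖vp d c X‖

/-- `X` and `Y` are (representatives of) consecutive minimal vectors of `Λ`, ordered by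
height: no equivalence class of minimal vectors has height strictly between those of `X`
and `Y`. -/
def ConsecMin (d c : ℕ) (Λ : Set (Fin (d + c) → ℝ)) (X Y : Fin (d + c) → ℝ) : Prop :=
  IsMinVec d c Λ X ∧ IsMinVec d c Λ Y ∧ ‖vp d c X‖ < ‖vp d c Y‖ ∧
    ∀ Z, IsMinVec d c Λ Z → ‖vp d c X‖ < ‖vp d c Z‖ → ‖vp d c Y‖ ≤ ‖vp d c Z‖

/-- The diagonal matrix `g_t = diag(e^{ct}·I_d, e^{-dt}·I_c)` of the flow. -/
def gtMat (d c : ℕ) (t : ℝ) : Matrix (Fin (d + c)) (Fin (d + c)) ℝ :=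
  Matrix.diagonal
    (Fin.append (fun _ : Fin d => Real.exp (c * t)) (fun _ : Fin c => Real.exp (-(d * t))))

lemma gtMat_det (d c : ℕ) (t : ℝ) : (gtMat d c t).det = 1 := by
  rw [gtMat, Matrix.det_diagonal, Fin.prod_univ_add]
  simp only [Fin.append_left, Fin.append_right, Finset.prod_const, Finset.card_univ,
    Fintype.card_fin, ← Real.exp_nat_mul, ← Real.exp_add, Real.exp_eq_one_iff]
  ring

/-- The max-norm `‖x‖_{ℝ^{d+c}} = max(|x|_+, |x|_-)`. -/
def fullNorm (d c : ℕ) (x : Fin (d + c) → ℝ) : ℝ := max ‖hp d c x‖ ‖vp d c x‖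

/-- First minimum `λ₁(Λ)` of `Λ` for the max-norm. -/
def lambda1 (d c : ℕ) (Λ : Set (Fin (d + c) → ℝ)) : ℝ :=
  sInf (fullNorm d c '' {x | x ∈ Λ ∧ x ≠ 0})

/-- `v₀, v₁` witness membership of `Λ` in the transversal `S`: they are linearly independent,
`|v₁|_+` and `|v₀|_-` are `< |v₁|_- = |v₀|_+`, and the only nonzero points of `Λ` in the
closed ball of radius `λ₁(Λ)` are `±v₀, ±v₁`. -/
def SWitness (d c : ℕ) (Λ : Set (Fin (d + c) → ℝ)) (v₀ v₁ : Fin (d + c) → ℝ) : Prop :=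
  v₀ ∈ Λ ∧ v₁ ∈ Λ ∧ LinearIndependent ℝ ![v₀, v₁] ∧
    ‖hp d c v₁‖ < ‖vp d c v₁‖ ∧ ‖vp d c v₀‖ < ‖vp d c v₁‖ ∧ ‖vp d c v₁‖ = ‖hp d c v₀‖ ∧
    ∀ x ∈ Λ, x ≠ 0 → fullNorm d c x ≤ lambda1 d c Λ → x = v₀ ∨ x = -v₀ ∨ x = v₁ ∨ x = -v₁

/-- The transversal `S` (as a predicate on lattices of `ℝ^{d+c}`). -/
def SPred (d c : ℕ) (Λ : Set (Fin (d + c) → ℝ)) : Prop := ∃ v₀ v₁, SWitness d c Λ v₀ v₁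

/-- `w` witnesses membership of `Λ` in the transversal `S'`: the only nonzero points of `Λ`
in the closed ball of radius `λ₁(Λ)` are `±w`, and this ball equals the cylinder `C(w)`. -/
def S'Witness (d c : ℕ) (Λ : Set (Fin (d + c) → ℝ)) (w : Fin (d + c) → ℝ) : Prop :=
  w ∈ Λ ∧ w ≠ 0 ∧
    (∀ x ∈ Λ, x ≠ 0 → fullNorm d c x ≤ lambda1 d c Λ → x = w ∨ x = -w) ∧
    {x : Fin (d + c) → ℝ | fullNorm d c x ≤ lambda1 d c Λ} =
      {x : Fin (d + c) → ℝ | ‖hp d c x‖ ≤ ‖hp d c w‖ ∧ ‖vp d c x‖ ≤ ‖vp d c w‖}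

/-- The transversal `S'` (as a predicate on lattices of `ℝ^{d+c}`). -/
def S'Pred (d c : ℕ) (Λ : Set (Fin (d + c) → ℝ)) : Prop := ∃ w, S'Witness d c Λ w

/-- The exceptional set `𝒩`: lattices having two nonzero vectors `v₁ ≠ ±v₂` with equal
positive horizontal norms or equal positive heights, or a nonzero vector in the vertical
subspace `{0}×ℝ^c` or in the horizontal subspace `ℝ^d×{0}`. -/
def NPred (d c : ℕ) (Λ : Set (Fin (d + c) → ℝ)) : Prop :=
  (∃ v₁ ∈ Λ, ∃ v₂ ∈ Λ, v₁ ≠ 0 ∧ v₂ ≠ 0 ∧ v₁ ≠ v₂ ∧ v₁ ≠ -v₂ ∧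
    ((‖hp d c v₁‖ = ‖hp d c v₂‖ ∧ 0 < ‖hp d c v₁‖) ∨
     (‖vp d c v₁‖ = ‖vp d c v₂‖ ∧ 0 < ‖vp d c v₁‖))) ∨
  (∃ v ∈ Λ, v ≠ 0 ∧ (hp d c v = 0 ∨ vp d c v = 0))

lemma hp_gt (d c : ℕ) (t : ℝ) (x : Fin (d+c) → ℝ) :
    hp d c ((gtMat d c t).mulVec x) = Real.exp (c*t) • hp d c x := by
  ext i
  simp [hp, gtMat, Matrix.mulVec_diagonal, Fin.append_left]

lemma vp_gt (d c : ℕ) (t : ℝ) (x : Fin (d+c) → ℝ) :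
    vp d c ((gtMat d c t).mulVec x) = Real.exp (-(d*t)) • vp d c x := by
  ext i
  simp [vp, gtMat, Matrix.mulVec_diagonal, Fin.append_right]

lemma norm_hp_gt (d c : ℕ) (t : ℝ) (x : Fin (d+c) → ℝ) :
    ‖hp d c ((gtMat d c t).mulVec x)‖ = Real.exp (c*t) * ‖hp d c x‖ := by
  rw [hp_gt, norm_smul, Real.norm_eq_abs, abs_of_pos (Real.exp_pos _)]

lemma norm_vp_gt (d c : ℕ) (t : ℝ) (x : Fin (d+c) → ℝ) :
    ‖vp d c ((gtMat d c t).mulVec x)‖ = Real.exp (-(d*t)) * ‖vp d c x‖ := by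
  rw [vp_gt, norm_smul, Real.norm_eq_abs, abs_of_pos (Real.exp_pos _)]

lemma fullNorm_nonneg (d c : ℕ) (x : Fin (d+c) → ℝ) : 0 ≤ fullNorm d c x :=
  le_trans (norm_nonneg _) (le_max_left _ _)

lemma eq_zero_of_hp_vp (d c : ℕ) (x : Fin (d+c) → ℝ) (h1 : hp d c x = 0) (h2 : vp d c x = 0) :
    x = 0 := by
  funext i
  induction i using Fin.addCases with
  | left i => simpa [hp] using congrArg (fun u : EuclideanSpace ℝ (Fin d) => u i) h1
  | right i => simpa [vp] using congrArg (fun u : EuclideanSpace ℝ (Fin c) => u i) h2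

lemma fullNorm_zero (d c : ℕ) : fullNorm d c 0 = 0 := by
  have h1 : hp d c 0 = 0 := by ext i; simp [hp]
  have h2 : vp d c 0 = 0 := by ext i; simp [vp]
  simp [fullNorm, h1, h2]

lemma fullNorm_pos (d c : ℕ) (x : Fin (d+c) → ℝ) (hx : x ≠ 0) : 0 < fullNorm d c x := by
  rcases (fullNorm_nonneg d c x).lt_or_eq with h | h
  · exact h
  · exfalso; apply hx
    have h1 : ‖hp d c x‖ ≤ 0 := h ▸ le_max_left _ _
    have h2 : ‖vp d c x‖ ≤ 0 := h ▸ le_max_right _ _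
    exact eq_zero_of_hp_vp d c x (norm_eq_zero.mp (le_antisymm h1 (norm_nonneg _)))
      (norm_eq_zero.mp (le_antisymm h2 (norm_nonneg _)))

lemma fullNorm_neg (d c : ℕ) (x : Fin (d+c) → ℝ) : fullNorm d c (-x) = fullNorm d c x := by
  have h1 : hp d c (-x) = -(hp d c x) := by ext i; simp [hp]
  have h2 : vp d c (-x) = -(vp d c x) := by ext i; simp [vp]
  simp [fullNorm, h1, h2]

lemma abs_coord_le_norm_euc {m : ℕ} (u : EuclideanSpace ℝ (Fin m)) (i : Fin m) : |u i| ≤ ‖u‖ := by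
  rw [EuclideanSpace.norm_eq]
  have h0 : |u i| = Real.sqrt (‖u i‖^2) := by
    rw [Real.sqrt_sq_eq_abs, Real.norm_eq_abs, abs_abs]
  rw [h0]
  apply Real.sqrt_le_sqrt
  exact Finset.single_le_sum (f := fun j => ‖u j‖^2) (fun j _ => by positivity)
    (Finset.mem_univ i)

lemma supnorm_le_fullNorm (d c : ℕ) (x : Fin (d+c) → ℝ) : ‖x‖ ≤ fullNorm d c x := by
  rw [pi_norm_le_iff_of_nonneg (fullNorm_nonneg d c x)]
  intro i
  induction i using Fin.addCases with
  | left i => exact le_trans (b := ‖hp d c x‖) (by simpa [hp, Real.norm_eq_abs] using abs_coord_le_norm_euc (hp d c x) i) (le_max_left _ _)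
  | right i => exact le_trans (b := ‖vp d c x‖) (by simpa [vp, Real.norm_eq_abs] using abs_coord_le_norm_euc (vp d c x) i) (le_max_right _ _)

lemma norm_euc_le {m : ℕ} (u : EuclideanSpace ℝ (Fin m)) (r : ℝ) (hr : 0 ≤ r)
    (h : ∀ i, |u i| ≤ r) : ‖u‖ ≤ m * r := by
  rw [EuclideanSpace.norm_eq]
  have h1 : ∑ i : Fin m, ‖u i‖^2 ≤ (m * r)^2 := by
    calc ∑ i : Fin m, ‖u i‖^2 ≤ ∑ _i : Fin m, r^2 := by
          apply Finset.sum_le_sum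
          intro i _
          rw [Real.norm_eq_abs]
          exact pow_le_pow_left₀ (abs_nonneg _) (h i) 2
      _ = m * r^2 := by simp [Finset.sum_const, Finset.card_univ]
      _ ≤ (m*r)^2 := by
          have : (m:ℝ) ≤ (m:ℝ)^2 := by
            rcases Nat.eq_zero_or_pos m with h0 | h0
            · simp [h0]
            · have : (1:ℝ) ≤ m := by exact_mod_cast h0
              nlinarith
          nlinarith [sq_nonneg r]
  calc Real.sqrt (∑ i : Fin m, ‖u i‖^2) ≤ Real.sqrt ((m*r)^2) := Real.sqrt_le_sqrt h1
    _ = m * r := Real.sqrt_sq (by positivity)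

lemma fullNorm_le_supnorm (d c : ℕ) (x : Fin (d+c) → ℝ) :
    fullNorm d c x ≤ (d+c) * ‖x‖ := by
  apply max_le
  · calc ‖hp d c x‖ ≤ d * ‖x‖ :=
        norm_euc_le _ _ (norm_nonneg _) (fun i => by
          simpa [hp, Real.norm_eq_abs] using norm_le_pi_norm x (Fin.castAdd c i))
      _ ≤ (d+c) * ‖x‖ := by
        apply mul_le_mul_of_nonneg_right _ (norm_nonneg _)
        push_cast; linarith [Nat.cast_nonneg (α := ℝ) c]
  · calc ‖vp d c x‖ ≤ c * ‖x‖ :=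
        norm_euc_le _ _ (norm_nonneg _) (fun i => by
          simpa [vp, Real.norm_eq_abs] using norm_le_pi_norm x (Fin.natAdd d i))
      _ ≤ (d+c) * ‖x‖ := by
        apply mul_le_mul_of_nonneg_right _ (norm_nonneg _)
        push_cast; linarith [Nat.cast_nonneg (α := ℝ) d]

lemma gtMat_mul (d c : ℕ) (s t : ℝ) : gtMat d c s * gtMat d c t = gtMat d c (s + t) := by
  unfold gtMat
  rw [Matrix.diagonal_mul_diagonal]
  apply congrArg
  funext i
  induction i using Fin.addCases with
  | left i => simp only [Pi.mul_apply, Fin.append_left, ← Real.exp_add]; ring_nf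
  | right i => simp only [Pi.mul_apply, Fin.append_right, ← Real.exp_add]; ring_nf

lemma latSet_sub {n : ℕ} (M : Matrix (Fin n) (Fin n) ℝ) {x y : Fin n → ℝ}
    (hx : x ∈ latSet M) (hy : y ∈ latSet M) : x - y ∈ latSet M := by
  obtain ⟨v, rfl⟩ := hx
  obtain ⟨w, rfl⟩ := hy
  refine ⟨v - w, ?_⟩
  have : (fun i => ((v - w) i : ℝ)) = (fun i => (v i : ℝ)) - fun i => (w i : ℝ) := by
    funext i; simp [Pi.sub_apply]
  show M.mulVec (fun i => (((v - w) i : ℤ) : ℝ)) = _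
  rw [this, Matrix.mulVec_sub]

lemma mulVec_int_eq_zero {n : ℕ} (M : Matrix (Fin n) (Fin n) ℝ) (hM : IsUnit M.det)
    (v : Fin n → ℝ) (h : M.mulVec v = 0) : v = 0 := by
  have := congrArg (fun y => M⁻¹.mulVec y) h
  simpa [Matrix.mulVec_mulVec, Matrix.nonsing_inv_mul M hM] using this

lemma latSet_norm_bounded_finite {n : ℕ} (M : Matrix (Fin n) (Fin n) ℝ) (hM : IsUnit M.det)
    (R : ℝ) : {x | x ∈ latSet M ∧ ‖x‖ ≤ R}.Finite := by
  classical
  set B : ℝ := ∑ i : Fin n, ∑ j : Fin n, |M⁻¹ i j| with hB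
  set N : ℤ := max 0 ⌈B * R⌉ with hN
  have hbox : ({v : Fin n → ℤ | ∀ i, v i ∈ Set.Icc (-N) N} : Set (Fin n → ℤ)).Finite := by
    apply Set.Finite.subset (Set.Finite.pi (t := fun _ : Fin n => Set.Icc (-N) N)
      fun _ => Set.finite_Icc _ _)
    intro v hv
    rw [Set.mem_pi]
    exact fun i _ => hv i
  apply Set.Finite.subset ((hbox.image (fun v : Fin n → ℤ => M.mulVec fun i => (v i : ℝ))))
  rintro x ⟨⟨v, rfl⟩, hxR⟩
  refine ⟨v, fun i => ?_, rfl⟩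
  set x := M.mulVec fun i => (v i : ℝ) with hx
  have hv : (fun i => (v i : ℝ)) = M⁻¹.mulVec x := by
    rw [hx, Matrix.mulVec_mulVec, Matrix.nonsing_inv_mul M hM, Matrix.one_mulVec]
  have hR0 : 0 ≤ R := le_trans (norm_nonneg x) hxR
  have hvi : |(v i : ℝ)| ≤ B * R := by
    have : (fun i => (v i : ℝ)) i = ∑ j, M⁻¹ i j * x j := by
      rw [hv]; rfl
    simp only at this
    rw [this]
    calc |∑ j, M⁻¹ i j * x j| ≤ ∑ j, |M⁻¹ i j * x j| := Finset.abs_sum_le_sum_abs _ _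
      _ ≤ ∑ j, |M⁻¹ i j| * R := by
          apply Finset.sum_le_sum
          intro j _
          rw [abs_mul]
          exact mul_le_mul_of_nonneg_left
            (le_trans (norm_le_pi_norm x j) hxR) (abs_nonneg _)
      _ = (∑ j, |M⁻¹ i j|) * R := by rw [Finset.sum_mul]
      _ ≤ B * R := by
          apply mul_le_mul_of_nonneg_right _ hR0
          exact Finset.single_le_sum (f := fun i => ∑ j, |M⁻¹ i j|)
            (fun i _ => Finset.sum_nonneg fun j _ => abs_nonneg _) (Finset.mem_univ i)
  have : |v i| ≤ N := by
    have h1 : (|v i| : ℝ) ≤ (N : ℝ) := by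
      rw [hN]
      calc (|v i| : ℝ) = |(v i : ℝ)| := by push_cast [Int.cast_abs]; ring
        _ ≤ B * R := hvi
        _ ≤ (⌈B * R⌉ : ℝ) := Int.le_ceil _
        _ ≤ ((max 0 ⌈B * R⌉ : ℤ) : ℝ) := by exact_mod_cast le_max_right _ _
    exact_mod_cast h1
  rw [Set.mem_Icc]
  exact abs_le.mp this

open ENNReal in
lemma packing {n : ℕ} (P : Finset (Fin n → ℝ)) (s R : ℝ) (hs : 0 < s) (hR : 0 ≤ R)
    (hmem : ∀ p ∈ P, ‖p‖ ≤ R) (hsep : ∀ p ∈ P, ∀ q ∈ P, p ≠ q → s ≤ ‖p - q‖) :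
    (P.card : ℝ) * s ^ n ≤ (2 * R + s) ^ n := by
  classical
  have hs2 : (0:ℝ) < s / 2 := by linarith
  have hdisj : (↑P : Set (Fin n → ℝ)).PairwiseDisjoint
      (fun p => Metric.ball p (s / 2)) := by
    intro p hp q hq hpq
    apply Set.disjoint_left.mpr
    intro x hxp hxq
    have h1 : dist x p < s / 2 := Metric.mem_ball.mp hxp
    have h2 : dist x q < s / 2 := Metric.mem_ball.mp hxq
    have h3 : dist p q < s := by
      calc dist p q ≤ dist p x + dist x q := dist_triangle _ _ _
        _ < s/2 + s/2 := by rw [dist_comm p x]; linarith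
        _ = s := by ring
    have := hsep p hp q hq hpq
    rw [← dist_eq_norm] at this
    linarith
  have hsub : (⋃ p ∈ P, Metric.ball p (s/2)) ⊆ Metric.closedBall 0 (R + s/2) := by
    intro x hx
    simp only [Set.mem_iUnion] at hx
    obtain ⟨p, hp, hxp⟩ := hx
    rw [Metric.mem_closedBall, dist_zero_right]
    have h1 : dist x p < s/2 := Metric.mem_ball.mp hxp
    calc ‖x‖ = ‖(x - p) + p‖ := by rw [sub_add_cancel]
      _ ≤ ‖x - p‖ + ‖p‖ := norm_add_le _ _
      _ ≤ s/2 + R := by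
          rw [← dist_eq_norm]
          exact add_le_add h1.le (hmem p hp)
      _ = R + s/2 := by ring
  have hmeas : volume (⋃ p ∈ P, Metric.ball p (s/2)) =
      ∑ p ∈ P, volume (Metric.ball p (s/2)) :=
    measure_biUnion_finset hdisj (fun p _ => measurableSet_ball)
  have hball : ∀ p : Fin n → ℝ, volume (Metric.ball p (s/2)) = ENNReal.ofReal (s ^ n) := by
    intro p
    rw [Real.volume_pi_ball p hs2]
    congr 1
    rw [Fintype.card_fin]
    congr 1
    ring
  have hcb : volume (Metric.closedBall (0 : Fin n → ℝ) (R + s/2)) =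
      ENNReal.ofReal ((2*R + s) ^ n) := by
    rw [Real.volume_pi_closedBall 0 (by linarith : (0:ℝ) ≤ R + s/2)]
    congr 1
    rw [Fintype.card_fin]
    congr 1
    ring
  have key : (P.card : ℝ≥0∞) * ENNReal.ofReal (s ^ n) ≤ ENNReal.ofReal ((2*R+s)^n) := by
    calc (P.card : ℝ≥0∞) * ENNReal.ofReal (s ^ n)
        = ∑ p ∈ P, volume (Metric.ball p (s/2)) := by
          rw [Finset.sum_congr rfl (fun p _ => hball p), Finset.sum_const, nsmul_eq_mul]
      _ = volume (⋃ p ∈ P, Metric.ball p (s/2)) := hmeas.symm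
      _ ≤ volume (Metric.closedBall (0 : Fin n → ℝ) (R + s/2)) := measure_mono hsub
      _ = ENNReal.ofReal ((2*R+s)^n) := hcb
  have h1 : ENNReal.ofReal ((P.card : ℝ) * s ^ n) ≤ ENNReal.ofReal ((2*R+s)^n) := by
    rw [ENNReal.ofReal_mul (by positivity : (0:ℝ) ≤ (P.card:ℝ))]
    rw [ENNReal.ofReal_natCast]
    exact key
  exact (ENNReal.ofReal_le_ofReal_iff (by positivity)).mp h1

lemma lambda1_le_general (d c : ℕ) (Λ : Set (Fin (d+c) → ℝ)) {w : Fin (d+c) → ℝ}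
    (hw : w ∈ Λ) (hne : w ≠ 0) : lambda1 d c Λ ≤ fullNorm d c w := by
  apply csInf_le
  · exact ⟨0, by rintro r ⟨x, _, rfl⟩; exact fullNorm_nonneg d c x⟩
  · exact ⟨w, ⟨hw, hne⟩, rfl⟩

lemma exists_lambda1_min (d c : ℕ) (hn : 0 < d + c) (M : Matrix (Fin (d+c)) (Fin (d+c)) ℝ)
    (hM : IsUnit M.det) :
    ∃ z ∈ latSet M, z ≠ 0 ∧ fullNorm d c z = lambda1 d c (latSet M) := by
  classical
  set e₀ : Fin (d+c) → ℤ := fun i => if i = ⟨0, hn⟩ then 1 else 0 with he₀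
  set x₀ : Fin (d+c) → ℝ := M.mulVec (fun i => ((e₀ i : ℤ) : ℝ)) with hx₀
  have hx₀mem : x₀ ∈ latSet M := ⟨e₀, rfl⟩
  have hx₀ne : x₀ ≠ 0 := by
    intro h
    have := mulVec_int_eq_zero M hM _ h
    have h1 := congrFun this ⟨0, hn⟩
    simp [he₀] at h1
  set Sfin : Set (Fin (d+c) → ℝ) :=
    {z | z ∈ latSet M ∧ z ≠ 0 ∧ fullNorm d c z ≤ fullNorm d c x₀} with hSfin
  have hfin : Sfin.Finite := by
    apply (latSet_norm_bounded_finite M hM (fullNorm d c x₀)).subset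
    rintro z ⟨hz1, _, hz3⟩
    exact ⟨hz1, le_trans (supnorm_le_fullNorm d c z) hz3⟩
  have hne : Sfin.Nonempty := ⟨x₀, hx₀mem, hx₀ne, le_refl _⟩
  obtain ⟨z, hzmem, hzmin⟩ := Set.exists_min_image Sfin (fullNorm d c) hfin hne
  obtain ⟨hz1, hz2, hz3⟩ := hzmem
  refine ⟨z, hz1, hz2, ?_⟩
  apply le_antisymm _ (lambda1_le_general d c _ hz1 hz2)
  apply le_csInf ⟨fullNorm d c x₀, Set.mem_image_of_mem _ (⟨hx₀mem, hx₀ne⟩ : x₀ ∈ {x | x ∈ latSet M ∧ x ≠ 0})⟩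
  rintro b ⟨y, ⟨hy1, hy2⟩, rfl⟩
  by_cases hy3 : fullNorm d c y ≤ fullNorm d c x₀
  · exact hzmin y ⟨hy1, hy2, hy3⟩
  · exact le_trans hz3 (not_le.mp hy3).le

lemma fullNorm_gt_le (d c : ℕ) {t : ℝ} (h0 : 0 ≤ t) (h1 : t ≤ 1) (x : Fin (d+c) → ℝ) :
    fullNorm d c ((gtMat d c t).mulVec x) ≤ Real.exp ((c:ℝ)+d) * fullNorm d c x := by
  have hc0 : (0:ℝ) ≤ c := Nat.cast_nonneg c
  have hd0 : (0:ℝ) ≤ d := Nat.cast_nonneg d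
  have hK1 : (1:ℝ) ≤ Real.exp ((c:ℝ)+d) := Real.one_le_exp (by positivity)
  have hect : Real.exp ((c:ℝ)*t) ≤ Real.exp ((c:ℝ)+d) := Real.exp_le_exp.mpr (by nlinarith)
  have hemdt : Real.exp (-((d:ℝ)*t)) ≤ 1 := by
    calc Real.exp (-((d:ℝ)*t)) ≤ Real.exp 0 := Real.exp_le_exp.mpr (by nlinarith)
      _ = 1 := Real.exp_zero
  apply max_le
  · rw [norm_hp_gt]
    calc Real.exp ((c:ℝ)*t) * ‖hp d c x‖ ≤ Real.exp ((c:ℝ)+d) * ‖hp d c x‖ :=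
          mul_le_mul_of_nonneg_right hect (norm_nonneg _)
      _ ≤ Real.exp ((c:ℝ)+d) * fullNorm d c x :=
          mul_le_mul_of_nonneg_left (le_max_left _ _) (by positivity)
  · rw [norm_vp_gt]
    calc Real.exp (-((d:ℝ)*t)) * ‖vp d c x‖ ≤ 1 * ‖vp d c x‖ :=
          mul_le_mul_of_nonneg_right hemdt (norm_nonneg _)
      _ = ‖vp d c x‖ := one_mul _
      _ ≤ fullNorm d c x := le_max_right _ _
      _ ≤ Real.exp ((c:ℝ)+d) * fullNorm d c x :=
          le_mul_of_one_le_left (fullNorm_nonneg d c x) hK1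

lemma fullNorm_le_gt (d c : ℕ) {t : ℝ} (h0 : 0 ≤ t) (h1 : t ≤ 1) (x : Fin (d+c) → ℝ) :
    fullNorm d c x ≤ Real.exp ((c:ℝ)+d) * fullNorm d c ((gtMat d c t).mulVec x) := by
  have hc0 : (0:ℝ) ≤ c := Nat.cast_nonneg c
  have hd0 : (0:ℝ) ≤ d := Nat.cast_nonneg d
  have hK1 : (1:ℝ) ≤ Real.exp ((c:ℝ)+d) := Real.one_le_exp (by positivity)
  have hedt : Real.exp ((d:ℝ)*t) ≤ Real.exp ((c:ℝ)+d) := Real.exp_le_exp.mpr (by nlinarith)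
  apply max_le
  · have hect1 : (1:ℝ) ≤ Real.exp ((c:ℝ)*t) := Real.one_le_exp (by positivity)
    calc ‖hp d c x‖ ≤ Real.exp ((c:ℝ)*t) * ‖hp d c x‖ :=
          le_mul_of_one_le_left (norm_nonneg _) hect1
      _ = ‖hp d c ((gtMat d c t).mulVec x)‖ := (norm_hp_gt d c t x).symm
      _ ≤ fullNorm d c ((gtMat d c t).mulVec x) := le_max_left _ _
      _ ≤ Real.exp ((c:ℝ)+d) * fullNorm d c ((gtMat d c t).mulVec x) :=
          le_mul_of_one_le_left (fullNorm_nonneg d c _) hK1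
  · have hcancel : Real.exp ((d:ℝ)*t) * Real.exp (-((d:ℝ)*t)) = 1 := by
      rw [← Real.exp_add]; simp
    have heq : ‖vp d c x‖ = Real.exp ((d:ℝ)*t) * ‖vp d c ((gtMat d c t).mulVec x)‖ := by
      rw [norm_vp_gt, ← mul_assoc, hcancel, one_mul]
    calc ‖vp d c x‖ = Real.exp ((d:ℝ)*t) * ‖vp d c ((gtMat d c t).mulVec x)‖ := heq
      _ ≤ Real.exp ((c:ℝ)+d) * ‖vp d c ((gtMat d c t).mulVec x)‖ :=
          mul_le_mul_of_nonneg_right hedt (norm_nonneg _)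
      _ ≤ Real.exp ((c:ℝ)+d) * fullNorm d c ((gtMat d c t).mulVec x) :=
          mul_le_mul_of_nonneg_left (le_max_right _ _) (by positivity)

lemma time_eq (d c : ℕ) (hd : 0 < d) (hc : 0 < c) {t a b : ℝ} (ha : 0 < a) (hb : 0 < b)
    (h : Real.exp (-((d:ℝ)*t)) * b = Real.exp ((c:ℝ)*t) * a) :
    t = (Real.log b - Real.log a) / ((c:ℝ) + d) := by
  have hlog := congrArg Real.log h
  rw [Real.log_mul (Real.exp_ne_zero _) hb.ne', Real.log_mul (Real.exp_ne_zero _) ha.ne',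
    Real.log_exp, Real.log_exp] at hlog
  have hc1 : (0:ℝ) < c := Nat.cast_pos.mpr hc
  have hd1 : (0:ℝ) < d := Nat.cast_pos.mpr hd
  have hcd : (0:ℝ) < (c:ℝ) + d := by linarith
  field_simp
  linarith

set_option maxHeartbeats 1600000 in
lemma main0 (d c : ℕ) (hd : 0 < d) (hc : 0 < c) (M : Matrix (Fin (d+c)) (Fin (d+c)) ℝ)
    (hdet : M.det = 1) :
    ∃ F : Finset ℝ, F.card ≤ ((2*9^(d+c)*(d+c)+1)^(d+c))^2 ∧
      ∀ t ∈ Set.Icc (0:ℝ) 1,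
        (SPred d c (latSet (gtMat d c t * M)) ∨ S'Pred d c (latSet (gtMat d c t * M))) →
          t ∈ F := by
  classical
  have hn : 0 < d + c := Nat.add_pos_left hd c
  have hunit : IsUnit M.det := by rw [hdet]; exact isUnit_one
  set K := Real.exp ((c:ℝ) + d) with hK
  have hKpos : 0 < K := Real.exp_pos _
  have hK1 : (1:ℝ) ≤ K := Real.one_le_exp (by positivity)
  obtain ⟨z₀, hz₀mem, hz₀ne, hz₀eq⟩ := exists_lambda1_min d c hn M hunit
  set lam := lambda1 d c (latSet M) with hlam
  have hlampos : 0 < lam := hz₀eq ▸ fullNorm_pos d c z₀ hz₀ne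
  -- the finite candidate set
  have hTfin : {w | w ∈ latSet M ∧ fullNorm d c w ≤ K^2 * lam}.Finite := by
    apply (latSet_norm_bounded_finite M hunit (K^2 * lam)).subset
    rintro w ⟨hw, hwle⟩
    exact ⟨hw, le_trans (supnorm_le_fullNorm d c w) hwle⟩
  set T := hTfin.toFinset with hT
  have hTmem : ∀ w, w ∈ T ↔ (w ∈ latSet M ∧ fullNorm d c w ≤ K^2 * lam) := by
    intro w; rw [hT, Set.Finite.mem_toFinset]; rfl
  -- cardinality bound for T
  have hTcard : T.card ≤ (2*9^(d+c)*(d+c)+1)^(d+c) := by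
    have hncast : (0:ℝ) < (d+c : ℕ) := Nat.cast_pos.mpr hn
    set s : ℝ := lam / (d+c : ℕ) with hs
    have hspos : 0 < s := div_pos hlampos hncast
    have hpack := packing T s (K^2 * lam) hspos (by positivity)
      (fun p hp => by
        obtain ⟨h1, h2⟩ := (hTmem p).mp hp
        exact le_trans (supnorm_le_fullNorm d c p) h2)
      (fun p hp q hq hpq => by
        obtain ⟨hp1, _⟩ := (hTmem p).mp hp
        obtain ⟨hq1, _⟩ := (hTmem q).mp hq
        have hsub : p - q ∈ latSet M := latSet_sub M hp1 hq1
        have hne : p - q ≠ 0 := sub_ne_zero.mpr hpq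
        have h1 : lam ≤ fullNorm d c (p - q) := lambda1_le_general d c _ hsub hne
        have h2 : fullNorm d c (p - q) ≤ (d+c : ℕ) * ‖p - q‖ := by
          have := fullNorm_le_supnorm d c (p - q)
          push_cast at this ⊢
          convert this using 2
        rw [hs, div_le_iff₀ hncast]
        calc lam ≤ (d+c : ℕ) * ‖p - q‖ := le_trans h1 h2
          _ = ‖p - q‖ * (d+c : ℕ) := mul_comm _ _)
    -- now convert the packing inequality
    have hfactor : 2 * (K^2 * lam) + s = s * (2 * K^2 * (d+c:ℕ) + 1) := by
      rw [hs]; field_simp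
    rw [hfactor, mul_pow] at hpack
    have hcard_le : (T.card : ℝ) ≤ (2 * K^2 * (d+c:ℕ) + 1) ^ (d+c) := by
      have hsn : (0:ℝ) < s ^ (d+c) := by positivity
      apply le_of_mul_le_mul_right _ hsn
      calc (T.card : ℝ) * s ^ (d+c) ≤ s ^ (d+c) * (2 * K^2 * (d+c:ℕ) + 1) ^ (d+c) := hpack
        _ = (2 * K^2 * (d+c:ℕ) + 1) ^ (d+c) * s ^ (d+c) := mul_comm _ _
    have hK9 : K^2 ≤ (9:ℝ)^(d+c) := by
      have h3 : K ≤ (3:ℝ)^(d+c) := by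
        have he1 : Real.exp 1 ≤ 3 := by
          have := Real.exp_one_lt_d9
          linarith
        have : K = Real.exp 1 ^ (d+c) := by
          rw [hK, ← Real.exp_nat_mul]
          congr 1
          push_cast; ring
        rw [this]
        exact pow_le_pow_left₀ (Real.exp_pos 1).le he1 (d+c)
      calc K^2 ≤ ((3:ℝ)^(d+c))^2 := by
            apply pow_le_pow_left₀ hKpos.le h3
        _ = (9:ℝ)^(d+c) := by
            rw [← pow_mul, mul_comm (d+c) 2, pow_mul]
            norm_num
    have hmono : (2 * K^2 * (d+c:ℕ) + 1) ^ (d+c) ≤ ((2*9^(d+c)*(d+c)+1 : ℕ) : ℝ) ^ (d+c) := by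
      apply pow_le_pow_left₀ (by positivity)
      push_cast
      have : (0:ℝ) ≤ (d+c:ℕ) := Nat.cast_nonneg _
      nlinarith
    have : (T.card : ℝ) ≤ (((2*9^(d+c)*(d+c)+1)^(d+c) : ℕ) : ℝ) := by
      calc (T.card : ℝ) ≤ (2 * K^2 * (d+c:ℕ) + 1) ^ (d+c) := hcard_le
        _ ≤ ((2*9^(d+c)*(d+c)+1 : ℕ) : ℝ) ^ (d+c) := hmono
        _ = (((2*9^(d+c)*(d+c)+1)^(d+c) : ℕ) : ℝ) := by push_cast; ring
    exact_mod_cast this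
  -- the finite set of times
  set φ : (Fin (d+c) → ℝ) × (Fin (d+c) → ℝ) → ℝ :=
    fun p => (Real.log ‖vp d c p.2‖ - Real.log ‖hp d c p.1‖) / ((c:ℝ) + d) with hφ
  refine ⟨Finset.image φ (T ×ˢ T), ?_, ?_⟩
  · calc (Finset.image φ (T ×ˢ T)).card ≤ (T ×ˢ T).card := Finset.card_image_le
      _ = T.card * T.card := Finset.card_product T T
      _ ≤ ((2*9^(d+c)*(d+c)+1)^(d+c)) * ((2*9^(d+c)*(d+c)+1)^(d+c)) :=
          Nat.mul_le_mul hTcard hTcard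
      _ = ((2*9^(d+c)*(d+c)+1)^(d+c))^2 := (sq _).symm
  intro t ht hpred
  obtain ⟨ht0, ht1⟩ := ht
  have hdet_t : (gtMat d c t * M).det = 1 := by
    rw [Matrix.det_mul, gtMat_det, hdet, one_mul]
  have hunit_t : IsUnit (gtMat d c t * M).det := by rw [hdet_t]; exact isUnit_one
  set Λt := latSet (gtMat d c t * M) with hΛt
  set lamt := lambda1 d c Λt with hlamt
  -- pullback
  have hpull : ∀ v ∈ Λt, ∃ w ∈ latSet M, v = (gtMat d c t).mulVec w := by
    rintro v ⟨k, rfl⟩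
    exact ⟨M.mulVec fun i => (k i : ℝ), ⟨k, rfl⟩, (Matrix.mulVec_mulVec _ _ _).symm⟩
  -- bound on lamt
  have hlamt_le : lamt ≤ K * lam := by
    obtain ⟨k, hk⟩ := hz₀mem
    have hztmem : (gtMat d c t).mulVec z₀ ∈ Λt := by
      refine ⟨k, ?_⟩
      show (gtMat d c t * M).mulVec (fun i => (k i : ℝ)) = _
      rw [← Matrix.mulVec_mulVec]
      exact congrArg (fun y => (gtMat d c t).mulVec y) hk
    have hztne : (gtMat d c t).mulVec z₀ ≠ 0 := by
      intro h
      have h2 := fullNorm_le_gt d c ht0 ht1 z₀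
      rw [h, fullNorm_zero, mul_zero] at h2
      have := fullNorm_pos d c z₀ hz₀ne
      linarith
    calc lamt ≤ fullNorm d c ((gtMat d c t).mulVec z₀) :=
          lambda1_le_general d c _ hztmem hztne
      _ ≤ K * fullNorm d c z₀ := fullNorm_gt_le d c ht0 ht1 z₀
      _ = K * lam := by rw [hz₀eq]
  -- helper: membership in T for pulled-back short vectors
  have hmemT : ∀ v ∈ Λt, fullNorm d c v ≤ lamt →
      ∃ w ∈ latSet M, v = (gtMat d c t).mulVec w ∧ w ∈ T := by
    intro v hv hvle
    obtain ⟨w, hw, hweq⟩ := hpull v hv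
    refine ⟨w, hw, hweq, (hTmem w).mpr ⟨hw, ?_⟩⟩
    calc fullNorm d c w ≤ K * fullNorm d c ((gtMat d c t).mulVec w) :=
          fullNorm_le_gt d c ht0 ht1 w
      _ = K * fullNorm d c v := by rw [hweq]
      _ ≤ K * lamt := mul_le_mul_of_nonneg_left hvle hKpos.le
      _ ≤ K * (K * lam) := mul_le_mul_of_nonneg_left hlamt_le hKpos.le
      _ = K^2 * lam := by ring
  rcases hpred with hS | hS'
  · -- S case
    obtain ⟨v₀, v₁, hv₀mem, hv₁mem, _, h1, h2, h3, hball⟩ := hS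
    obtain ⟨zt, hztmem, hztne, hzteq⟩ := exists_lambda1_min d c hn _ hunit_t
    have hzcases := hball zt hztmem hztne (le_of_eq hzteq)
    have hfn1 : fullNorm d c v₁ = ‖vp d c v₁‖ := max_eq_right h1.le
    have hfn0 : fullNorm d c v₀ = ‖vp d c v₁‖ := by
      have hle : ‖vp d c v₀‖ ≤ ‖hp d c v₀‖ := by rw [← h3]; exact h2.le
      rw [fullNorm, max_eq_left hle, ← h3]
    have hlamt_eq : lamt = ‖vp d c v₁‖ := by
      have hz : lamt = fullNorm d c zt := hzteq.symm
      rcases hzcases with h | h | h | h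
      · rw [hz, h, hfn0]
      · rw [hz, h, fullNorm_neg, hfn0]
      · rw [hz, h, hfn1]
      · rw [hz, h, fullNorm_neg, hfn1]
    have hrpos : 0 < ‖vp d c v₁‖ := lt_of_le_of_lt (norm_nonneg _) h1
    obtain ⟨w₀, hw₀lat, hw₀eq, hw₀T⟩ := hmemT v₀ hv₀mem (by rw [hfn0, ← hlamt_eq])
    obtain ⟨w₁, hw₁lat, hw₁eq, hw₁T⟩ := hmemT v₁ hv₁mem (by rw [hfn1, ← hlamt_eq])
    have ha : ‖hp d c v₀‖ = Real.exp ((c:ℝ)*t) * ‖hp d c w₀‖ := by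
      rw [hw₀eq, norm_hp_gt]
    have hb : ‖vp d c v₁‖ = Real.exp (-((d:ℝ)*t)) * ‖vp d c w₁‖ := by
      rw [hw₁eq, norm_vp_gt]
    have hkey : Real.exp (-((d:ℝ)*t)) * ‖vp d c w₁‖ = Real.exp ((c:ℝ)*t) * ‖hp d c w₀‖ := by
      rw [← hb, h3, ha]
    have hpos₀ : 0 < ‖hp d c w₀‖ := by
      have h4 : 0 < ‖hp d c v₀‖ := h3 ▸ hrpos
      rw [ha] at h4
      nlinarith [Real.exp_pos ((c:ℝ)*t), norm_nonneg (hp d c w₀)]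
    have hpos₁ : 0 < ‖vp d c w₁‖ := by
      have h4 : 0 < ‖vp d c v₁‖ := hrpos
      rw [hb] at h4
      nlinarith [Real.exp_pos (-((d:ℝ)*t)), norm_nonneg (vp d c w₁)]
    have hteq := time_eq d c hd hc hpos₀ hpos₁ hkey
    exact Finset.mem_image.mpr ⟨(w₀, w₁), Finset.mem_product.mpr ⟨hw₀T, hw₁T⟩, hteq.symm⟩
  · -- S' case
    obtain ⟨w, hwmem, hwne, _, hset⟩ := hS'
    have hmemball : ∀ x : Fin (d+c) → ℝ, fullNorm d c x ≤ lamt ↔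
        (‖hp d c x‖ ≤ ‖hp d c w‖ ∧ ‖vp d c x‖ ≤ ‖vp d c w‖) := fun x => by
      rw [hlamt]
      exact Set.ext_iff.mp hset x
    have happH : ∀ u : EuclideanSpace ℝ (Fin d),
        hp d c (Fin.append (u : Fin d → ℝ) (fun _ => (0:ℝ))) = u := by
      intro u; ext i; simp [hp]
    have happH0 : ∀ u : EuclideanSpace ℝ (Fin d),
        vp d c (Fin.append (u : Fin d → ℝ) (fun _ => (0:ℝ))) = 0 := by
      intro u; ext j; simp [vp]
    have happV : ∀ u : EuclideanSpace ℝ (Fin c),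
        vp d c (Fin.append (fun _ => (0:ℝ)) (u : Fin c → ℝ)) = u := by
      intro u; ext j; simp [vp]
    have happV0 : ∀ u : EuclideanSpace ℝ (Fin c),
        hp d c (Fin.append (fun _ => (0:ℝ)) (u : Fin c → ℝ)) = 0 := by
      intro u; ext i; simp [hp]
    have hp0 : hp d c (0 : Fin (d+c) → ℝ) = 0 := by ext i; simp [hp]
    have vp0 : vp d c (0 : Fin (d+c) → ℝ) = 0 := by ext i; simp [vp]
    have h0lam : 0 ≤ lamt := by
      have h0 : fullNorm d c (0 : Fin (d+c) → ℝ) ≤ lamt := (hmemball 0).mpr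
        ⟨by rw [hp0, norm_zero]; exact norm_nonneg _, by rw [vp0, norm_zero]; exact norm_nonneg _⟩
      rw [fullNorm_zero] at h0
      exact h0
    have hhw_le : ‖hp d c w‖ ≤ lamt := by
      set x := Fin.append (hp d c w : Fin d → ℝ) (fun _ => (0:ℝ)) with hxdef
      have hx : fullNorm d c x ≤ lamt := (hmemball x).mpr
        ⟨by rw [hxdef, happH], by rw [hxdef, happH0, norm_zero]; exact norm_nonneg _⟩
      have hfx : fullNorm d c x = ‖hp d c w‖ := by
        rw [fullNorm, hxdef, happH, happH0, norm_zero]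
        exact max_eq_left (norm_nonneg _)
      rw [← hfx]
      exact hx
    have hvw_le : ‖vp d c w‖ ≤ lamt := by
      set x := Fin.append (fun _ => (0:ℝ)) (vp d c w : Fin c → ℝ) with hxdef
      have hx : fullNorm d c x ≤ lamt := (hmemball x).mpr
        ⟨by rw [hxdef, happV0, norm_zero]; exact norm_nonneg _, by rw [hxdef, happV]⟩
      have hfx : fullNorm d c x = ‖vp d c w‖ := by
        rw [fullNorm, hxdef, happV, happV0, norm_zero]
        exact max_eq_right (norm_nonneg _)
      rw [← hfx]
      exact hx
    have hlam_le_h : lamt ≤ ‖hp d c w‖ := by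
      set u : EuclideanSpace ℝ (Fin d) := EuclideanSpace.single (⟨0,hd⟩ : Fin d) lamt with hu
      have hnu : ‖u‖ = lamt := by
        rw [hu, EuclideanSpace.norm_single, Real.norm_eq_abs]
        exact abs_of_nonneg h0lam
      set x := Fin.append (u : Fin d → ℝ) (fun _ => (0:ℝ)) with hxdef
      have hfx : fullNorm d c x = lamt := by
        rw [fullNorm, hxdef, happH, happH0, norm_zero, max_eq_left (norm_nonneg _), hnu]
      have hx := (hmemball x).mp (le_of_eq hfx)
      have h5 : ‖hp d c x‖ = lamt := by rw [hxdef, happH, hnu]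
      rw [← h5]
      exact hx.1
    have hlam_le_v : lamt ≤ ‖vp d c w‖ := by
      set u : EuclideanSpace ℝ (Fin c) := EuclideanSpace.single (⟨0,hc⟩ : Fin c) lamt with hu
      have hnu : ‖u‖ = lamt := by
        rw [hu, EuclideanSpace.norm_single, Real.norm_eq_abs]
        exact abs_of_nonneg h0lam
      set x := Fin.append (fun _ => (0:ℝ)) (u : Fin c → ℝ) with hxdef
      have hfx : fullNorm d c x = lamt := by
        rw [fullNorm, hxdef, happV, happV0, norm_zero, max_eq_right (norm_nonneg _), hnu]
      have hx := (hmemball x).mp (le_of_eq hfx)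
      have h5 : ‖vp d c x‖ = lamt := by rw [hxdef, happV, hnu]
      rw [← h5]
      exact hx.2
    have heqh : ‖hp d c w‖ = lamt := le_antisymm hhw_le hlam_le_h
    have heqv : ‖vp d c w‖ = lamt := le_antisymm hvw_le hlam_le_v
    have hlamt_pos : 0 < lamt := by
      rcases h0lam.lt_or_eq with h | h
      · exact h
      · exfalso
        apply hwne
        apply eq_zero_of_hp_vp
        · exact norm_eq_zero.mp (by rw [heqh, ← h])
        · exact norm_eq_zero.mp (by rw [heqv, ← h])
    have hfnw : fullNorm d c w ≤ lamt := by
      rw [fullNorm, heqh, heqv, max_self]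
    obtain ⟨w₀, hw₀lat, hw₀eq, hw₀T⟩ := hmemT w hwmem hfnw
    have ha : ‖hp d c w‖ = Real.exp ((c:ℝ)*t) * ‖hp d c w₀‖ := by
      rw [hw₀eq, norm_hp_gt]
    have hb : ‖vp d c w‖ = Real.exp (-((d:ℝ)*t)) * ‖vp d c w₀‖ := by
      rw [hw₀eq, norm_vp_gt]
    have hkey : Real.exp (-((d:ℝ)*t)) * ‖vp d c w₀‖ = Real.exp ((c:ℝ)*t) * ‖hp d c w₀‖ := by
      rw [← hb, heqv, ← heqh, ha]
    have hpos₀ : 0 < ‖hp d c w₀‖ := by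
      have h4 : 0 < ‖hp d c w‖ := heqh ▸ hlamt_pos
      rw [ha] at h4
      nlinarith [Real.exp_pos ((c:ℝ)*t), norm_nonneg (hp d c w₀)]
    have hpos₁ : 0 < ‖vp d c w₀‖ := by
      have h4 : 0 < ‖vp d c w‖ := heqv ▸ hlamt_pos
      rw [hb] at h4
      nlinarith [Real.exp_pos (-((d:ℝ)*t)), norm_nonneg (vp d c w₀)]
    have hteq := time_eq d c hd hc hpos₀ hpos₁ hkey
    exact Finset.mem_image.mpr ⟨(w₀, w₀), Finset.mem_product.mpr ⟨hw₀T, hw₀T⟩, hteq.symm⟩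

/-- **Bounded number of visits in unit time.** There is a positive integer `A = A(d,c)` such
that for every unimodular lattice `Λ = M·ℤ^{d+c}` and every `t₀ ∈ ℝ`, the flow trajectory
`(g_tΛ)` visits each of the transversals `S` and `S'` at most `A` times during `[t₀, t₀+1]`. -/
theorem visits_in_unit_interval_bounded (d c : ℕ) (hd : 0 < d) (hc : 0 < c) :
    ∃ A : ℕ, 0 < A ∧
      ∀ M : Matrix (Fin (d + c)) (Fin (d + c)) ℝ, M.det = 1 → ∀ t₀ : ℝ,
        (∃ F : Finset ℝ, F.card ≤ A ∧
          ∀ t ∈ Set.Icc t₀ (t₀ + 1), SPred d c (latSet (gtMat d c t * M)) → t ∈ F) ∧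
        (∃ F : Finset ℝ, F.card ≤ A ∧
          ∀ t ∈ Set.Icc t₀ (t₀ + 1), S'Pred d c (latSet (gtMat d c t * M)) → t ∈ F) := by
  refine ⟨((2*9^(d+c)*(d+c)+1)^(d+c))^2 + 1, Nat.succ_pos _, ?_⟩
  intro M hdet t₀
  have hdet' : (gtMat d c t₀ * M).det = 1 := by
    rw [Matrix.det_mul, gtMat_det, hdet, one_mul]
  obtain ⟨F₀, hF₀card, hF₀⟩ := main0 d c hd hc (gtMat d c t₀ * M) hdet'
  have hcard : (F₀.image (· + t₀)).card ≤ ((2*9^(d+c)*(d+c)+1)^(d+c))^2 + 1 :=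
    le_trans Finset.card_image_le (le_trans hF₀card (Nat.le_succ _))
  have hkey : ∀ t ∈ Set.Icc t₀ (t₀ + 1),
      (SPred d c (latSet (gtMat d c t * M)) ∨ S'Pred d c (latSet (gtMat d c t * M))) →
        t ∈ F₀.image (· + t₀) := by
    intro t ht hpred
    have hs : t - t₀ ∈ Set.Icc (0:ℝ) 1 := ⟨by linarith [ht.1], by linarith [ht.2]⟩
    have hmat : gtMat d c (t - t₀) * (gtMat d c t₀ * M) = gtMat d c t * M := by
      rw [← mul_assoc, gtMat_mul, sub_add_cancel]
    have hpred' : SPred d c (latSet (gtMat d c (t - t₀) * (gtMat d c t₀ * M))) ∨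
        S'Pred d c (latSet (gtMat d c (t - t₀) * (gtMat d c t₀ * M))) := by
      rw [hmat]
      exact hpred
    have := hF₀ (t - t₀) hs hpred'
    exact Finset.mem_image.mpr ⟨t - t₀, this, by ring⟩
  exact ⟨⟨F₀.image (· + t₀), hcard, fun t ht h => hkey t ht (Or.inl h)⟩,
    ⟨F₀.image (· + t₀), hcard, fun t ht h => hkey t ht (Or.inr h)⟩⟩
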